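/- arXiv:1803.00790 — 2 statements merged into one kernel-verified Lean document; each statement's English description precedes it below -/
import Mathlib

section
/- Let (T_j)_{j≥1} be a strictly increasing sequence of positive reals with T_j → ∞, let (Θ_j)_{j≥1} be positive reals, and let a : (0,∞) × ℕ → [0,∞). Then there exists a unique nondecreasing right-continuous function x : [0,∞) → ℕ with x(0) = 0 satisfying, for every t ≥ 0, x(t) = #{ j ≥ 1 : T_j ≤ t and Θ_j ≤ a(T_j, x(T_j⁻)) }, where x(T_j⁻) denotes the left limit of x at T_j. Moreover x(t) ≤ #{ j ≥ 1 : T_j ≤ t } for every t ≥ 0. -/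
open scoped NNReal
open Filter

/-!
Because the times `T j` increase strictly, the counting function of any set of selected points is
constant just before `T j`, where it equals the number of selected `i < j`. The selection rule thus
becomes a recursion in `j` (select `j` iff `Θ j ≤ a (T j) (#selected i < j)`) with exactly one
solution; this pins down the left limits and hence `x`. Conversely, since `T j → ∞`, the counting
function of the points so selected is finite, monotone and right-continuous with those left limits.
-/

section SelfConsistentCount

open Classical in
/-- The number of indices `i < j` selected by the rule "select `i` iff `q i n` holds, where `n` is
the number of indices selected before `i`". -/
noncomputable def selectedCount (q : ℕ → ℕ → Prop) : ℕ → ℕ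
  | 0 => 0
  | j + 1 => selectedCount q j + if q j (selectedCount q j) then 1 else 0

open Classical in
lemma ncard_setOf_lt_succ_and (P : ℕ → Prop) (j : ℕ) :
    {i | i < j + 1 ∧ P i}.ncard = {i | i < j ∧ P i}.ncard + if P j then 1 else 0 := by
  have hcount : ∀ n, {i | i < n ∧ P i}.ncard = Nat.count P n := fun n => by
    rw [Nat.count_eq_card_filter_range, ← Set.ncard_coe_finset]
    congr 1
    ext i
    simp
  rw [hcount, hcount, Nat.count_succ]

lemma selectedCount_eq_ncard (q : ℕ → ℕ → Prop) (j : ℕ) :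
    selectedCount q j = {i | i < j ∧ q i (selectedCount q i)}.ncard := by
  induction j with
  | zero => simp [selectedCount]
  | succ j ih => rw [ncard_setOf_lt_succ_and, ← ih, selectedCount]

lemma eq_selectedCount {q : ℕ → ℕ → Prop} {c : ℕ → ℕ}
    (hc : ∀ j, c j = {i | i < j ∧ q i (c i)}.ncard) : c = selectedCount q := by
  funext j
  induction j with
  | zero => simpa [selectedCount] using hc 0
  | succ j ih => rw [hc, ncard_setOf_lt_succ_and, ← hc, ih, selectedCount]

end SelfConsistentCount

section CountingFunction

variable {T : ℕ → ℝ≥0}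

lemma finite_setOf_le_of_tendsto (hT : Tendsto T atTop atTop) (t : ℝ≥0) :
    {j | T j ≤ t}.Finite := by
  have h := hT.eventually_gt_atTop t
  rw [← Nat.cofinite_eq_atTop, eventually_cofinite] at h
  simpa only [not_lt] using h

lemma exists_pos_forall_le_iff_le (hmono : Monotone T) (hT : Tendsto T atTop atTop)
    (t : ℝ≥0) : ∃ ε, 0 < ε ∧ ∀ u, t ≤ u → u < t + ε → ∀ i, T i ≤ u ↔ T i ≤ t := by
  classical
  have hex : ∃ n, t < T n := (hT.eventually_gt_atTop t).exists
  -- `ε` is the gap from `t` to the first point after it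
  refine ⟨T (Nat.find hex) - t, tsub_pos_of_lt (Nat.find_spec hex), fun u htu hu i => ?_⟩
  rw [add_tsub_cancel_of_le (Nat.find_spec hex).le] at hu
  refine ⟨fun hiu => ?_, fun hit => hit.trans htu⟩
  have hi : i < Nat.find hex := lt_of_not_ge fun h => (hu.trans_le (hmono h)).not_ge hiu
  exact not_lt.mp (Nat.find_min hex hi)

lemma exists_pos_forall_le_iff_lt (hT : StrictMono T) (j : ℕ) :
    ∃ ε, 0 < ε ∧ ∀ u, u < T j → T j < u + ε → ∀ i, T i ≤ u ↔ i < j := by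
  cases j with
  | zero =>
    refine ⟨1, one_pos, fun u hu _ i => iff_of_false (fun hiu => ?_) (Nat.not_lt_zero i)⟩
    exact (hu.trans_le (hT.monotone (Nat.zero_le i))).not_ge hiu
  | succ k =>
    refine ⟨T (k + 1) - T k, tsub_pos_of_lt (hT k.lt_succ_self), fun u hu hTu i => ?_⟩
    have hku : T k < u := lt_of_not_ge fun huk => hTu.not_ge <| by
      calc u + (T (k + 1) - T k) ≤ T k + (T (k + 1) - T k) := by gcongr
        _ = T (k + 1) := add_tsub_cancel_of_le (hT k.lt_succ_self).le
    refine ⟨fun hiu => hT.lt_iff_lt.mp (hiu.trans_lt hu), fun hi => ?_⟩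
    exact (hT.monotone (Nat.lt_succ_iff.mp hi)).trans hku.le

def HasLeftLimit (x : ℝ≥0 → ℕ) (s : ℝ≥0) (m : ℕ) : Prop :=
  ∃ ε, 0 < ε ∧ ∀ u, u < s → s < u + ε → x u = m

lemma HasLeftLimit.unique {x : ℝ≥0 → ℕ} {s : ℝ≥0} {m₁ m₂ : ℕ} (hs : 0 < s)
    (h₁ : HasLeftLimit x s m₁) (h₂ : HasLeftLimit x s m₂) : m₁ = m₂ := by
  obtain ⟨ε₁, hε₁, hx₁⟩ := h₁
  obtain ⟨ε₂, hε₂, hx₂⟩ := h₂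
  obtain ⟨u, hu, hus⟩ := exists_between (tsub_lt_self hs (lt_min hε₁ hε₂))
  have hsu : s < u + min ε₁ ε₂ := lt_add_of_tsub_lt_right hu
  rw [← hx₁ u hus (hsu.trans_le (by gcongr; exact min_le_left _ _)),
    hx₂ u hus (hsu.trans_le (by gcongr; exact min_le_right _ _))]

noncomputable def thinnedCount (T : ℕ → ℝ≥0) (p : ℕ → Prop) (t : ℝ≥0) : ℕ :=
  {j | T j ≤ t ∧ p j}.ncard

variable {p : ℕ → Prop}

lemma thinnedCount_le_ncard (hT : Tendsto T atTop atTop) (t : ℝ≥0) :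
    thinnedCount T p t ≤ {j | T j ≤ t}.ncard :=
  Set.ncard_le_ncard (fun _ hj => hj.1) (finite_setOf_le_of_tendsto hT t)

lemma thinnedCount_monotone (hT : Tendsto T atTop atTop) : Monotone (thinnedCount T p) :=
  fun _ t hst => Set.ncard_le_ncard (fun _ hj => ⟨hj.1.trans hst, hj.2⟩)
    ((finite_setOf_le_of_tendsto hT t).subset fun _ hj => hj.1)

lemma thinnedCount_zero (hpos : ∀ j, 0 < T j) : thinnedCount T p 0 = 0 := by
  have hempty : {j | T j ≤ 0 ∧ p j} = ∅ :=
    Set.eq_empty_of_forall_notMem fun j hj => (hpos j).ne' (le_zero_iff.mp hj.1)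
  rw [thinnedCount, hempty, Set.ncard_empty]

lemma thinnedCount_right_const (hmono : Monotone T) (hT : Tendsto T atTop atTop) (t : ℝ≥0) :
    ∃ ε, 0 < ε ∧ ∀ u, t ≤ u → u < t + ε → thinnedCount T p u = thinnedCount T p t := by
  obtain ⟨ε, hε, hwindow⟩ := exists_pos_forall_le_iff_le hmono hT t
  refine ⟨ε, hε, fun u htu hu => ?_⟩
  simp only [thinnedCount, hwindow u htu hu]

lemma thinnedCount_hasLeftLimit (hT : StrictMono T) (j : ℕ) :
    HasLeftLimit (thinnedCount T p) (T j) {i | i < j ∧ p i}.ncard := by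
  obtain ⟨ε, hε, hwindow⟩ := exists_pos_forall_le_iff_lt hT j
  refine ⟨ε, hε, fun u hu hTu => ?_⟩
  simp only [thinnedCount, hwindow u hu hTu]

end CountingFunction

theorem statement4_general (T : ℕ → ℝ≥0) (hTpos : ∀ j, 0 < T j) (hTmono : StrictMono T)
    (hTtop : Filter.Tendsto T Filter.atTop Filter.atTop)
    (Θ : ℕ → ℝ≥0)
    (a : ℝ≥0 → ℕ → ℝ≥0) :
    (∃! x : ℝ≥0 → ℕ,
      Monotone x ∧ x 0 = 0 ∧
      -- right-continuity
      (∀ t : ℝ≥0, ∃ ε : ℝ≥0, 0 < ε ∧ ∀ u, t ≤ u → u < t + ε → x u = x t) ∧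
      ∃ xm : ℕ → ℕ,
        -- `xm j` is the left limit of `x` at `T j`
        (∀ j : ℕ, ∃ ε : ℝ≥0, 0 < ε ∧ ∀ u, u < T j → T j < u + ε → x u = xm j) ∧
        ∀ t : ℝ≥0, x t = {j : ℕ | T j ≤ t ∧ Θ j ≤ a (T j) (xm j)}.ncard) ∧
    (∀ x : ℝ≥0 → ℕ,
      (Monotone x ∧ x 0 = 0 ∧
        (∀ t : ℝ≥0, ∃ ε : ℝ≥0, 0 < ε ∧ ∀ u, t ≤ u → u < t + ε → x u = x t) ∧
        ∃ xm : ℕ → ℕ,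
          (∀ j : ℕ, ∃ ε : ℝ≥0, 0 < ε ∧ ∀ u, u < T j → T j < u + ε → x u = xm j) ∧
          ∀ t : ℝ≥0, x t = {j : ℕ | T j ≤ t ∧ Θ j ≤ a (T j) (xm j)}.ncard) →
      ∀ t : ℝ≥0, x t ≤ {j : ℕ | T j ≤ t}.ncard) := by
  set q : ℕ → ℕ → Prop := fun j n => Θ j ≤ a (T j) n
  refine ⟨⟨thinnedCount T fun j => q j (selectedCount q j),
    ⟨thinnedCount_monotone hTtop, thinnedCount_zero hTpos,
      thinnedCount_right_const hTmono.monotone hTtop, selectedCount q, fun j => ?_,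
      fun t => rfl⟩, ?_⟩, ?_⟩
  · rw [selectedCount_eq_ncard]
    exact thinnedCount_hasLeftLimit hTmono j
  · rintro x ⟨-, -, -, xm, hlim, hx⟩
    obtain rfl : x = thinnedCount T fun j => q j (xm j) := funext hx
    obtain rfl : xm = selectedCount q := eq_selectedCount fun j =>
      HasLeftLimit.unique (hTpos j) (hlim j) (thinnedCount_hasLeftLimit hTmono j)
    rfl
  · rintro x ⟨-, -, -, xm, -, hx⟩ t
    rw [hx t]
    exact thinnedCount_le_ncard hTtop t

/-- Recursive thinning construction (proof of Proposition 2.1): given strictly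
increasing positive times `T_j → ∞`, positive marks `Θ_j`, and a (pathwise
frozen) intensity functional `a`, there is a unique nondecreasing
right-continuous `x : [0,∞) → ℕ` with `x 0 = 0` such that
`x t = #{j : T j ≤ t ∧ Θ j ≤ a (T j) (x (T j⁻))}` for all `t`, where `x (T j⁻)`
(recorded by the auxiliary function `xm`) is the left limit of `x` at `T j`.
Moreover `x t ≤ #{j : T j ≤ t}`. -/
theorem statement4 (T : ℕ → ℝ≥0) (hTpos : ∀ j, 0 < T j) (hTmono : StrictMono T)
    (hTtop : Filter.Tendsto T Filter.atTop Filter.atTop)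
    (Θ : ℕ → ℝ≥0) (hΘpos : ∀ j, 0 < Θ j)
    (a : ℝ≥0 → ℕ → ℝ≥0) :
    (∃! x : ℝ≥0 → ℕ,
      Monotone x ∧ x 0 = 0 ∧
      -- right-continuity
      (∀ t : ℝ≥0, ∃ ε : ℝ≥0, 0 < ε ∧ ∀ u, t ≤ u → u < t + ε → x u = x t) ∧
      ∃ xm : ℕ → ℕ,
        -- `xm j` is the left limit of `x` at `T j`
        (∀ j : ℕ, ∃ ε : ℝ≥0, 0 < ε ∧ ∀ u, u < T j → T j < u + ε → x u = xm j) ∧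
        ∀ t : ℝ≥0, x t = {j : ℕ | T j ≤ t ∧ Θ j ≤ a (T j) (xm j)}.ncard) ∧
    (∀ x : ℝ≥0 → ℕ,
      (Monotone x ∧ x 0 = 0 ∧
        (∀ t : ℝ≥0, ∃ ε : ℝ≥0, 0 < ε ∧ ∀ u, t ≤ u → u < t + ε → x u = x t) ∧
        ∃ xm : ℕ → ℕ,
          (∀ j : ℕ, ∃ ε : ℝ≥0, 0 < ε ∧ ∀ u, u < T j → T j < u + ε → x u = xm j) ∧
          ∀ t : ℝ≥0, x t = {j : ℕ | T j ≤ t ∧ Θ j ≤ a (T j) (xm j)}.ncard) →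
      ∀ t : ℝ≥0, x t ≤ {j : ℕ | T j ≤ t}.ncard) :=
  statement4_general T hTpos hTmono hTtop Θ a
end

section
/- Fix an integer m ≥ 1 and, for each ι ∈ {1,…,m}, a set Q^ι ⊆ (0,∞) × (0,∞) such that Q^ι ∩ ((0,t] × (0,M]) is finite for all t, M > 0 and no two points of Q^ι share the same first coordinate. Given an intensity functional λ = (λ^ι)_{ι} : (0,∞) × ℕ^m → [0,∞)^m, call x = (x^ι)_{ι} : [0,∞) → ℕ^m a solution of the thinning equation for λ if each x^ι is nondecreasing and right-continuous with x^ι(0) = 0, and for all t ≥ 0 and all ι, x^ι(t) = #{ (s,θ) ∈ Q^ι : s ≤ t and θ ≤ λ^ι(s, x(s⁻)) } (in particular this set is finite), where x(s⁻) is the componentwise left limit. Let α and β be two intensity functionals that are strongly ordered: α^ι(t,y₁) ≤ β^ι(t,y₂) for every t > 0, every ι, and all y₁ ≤ y₂ componentwise in ℕ^m. If the thinning equation for β admits a unique solution y, then the thinning equation for α admits a unique solution x, and x is strongly dominated by y: for each ι every jump time of x^ι is a jump time of y^ι, so y^ι − x^ι is nondecreasing; in particular x(t) ≤ y(t) componentwise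 for all t ≥ 0. -/
open scoped NNReal

/-- `x` is a solution of the thinning equation driven by the point
configurations `Q = (Q^ι)` with intensity functional `lam`:
each `x^ι` is nondecreasing, right-continuous, starts at `0`, and
`x^ι(t) = #{(s,θ) ∈ Q^ι : s ≤ t, θ ≤ lam^ι(s, x(s⁻))}` (a finite set),
where the componentwise left limit `x(s⁻)` is recorded by `xm`. -/
def IsThinningSolution (m : ℕ) (Q : Fin m → Set (ℝ≥0 × ℝ≥0))
    (lam : ℝ≥0 → (Fin m → ℕ) → Fin m → ℝ≥0) (x : ℝ≥0 → Fin m → ℕ) : Prop :=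
  (∀ ι, Monotone fun t => x t ι) ∧ (∀ ι, x 0 ι = 0) ∧
  (∀ (ι : Fin m) (t : ℝ≥0), ∃ ε : ℝ≥0, 0 < ε ∧ ∀ u, t ≤ u → u < t + ε → x u ι = x t ι) ∧
  ∃ xm : ℝ≥0 → Fin m → ℕ,
    (∀ s : ℝ≥0, 0 < s → ∃ ε : ℝ≥0, 0 < ε ∧ ∀ u, u < s → s < u + ε → x u = xm s) ∧
    ∀ (t : ℝ≥0) (ι : Fin m),
      {q : ℝ≥0 × ℝ≥0 | q ∈ Q ι ∧ q.1 ≤ t ∧ q.2 ≤ lam q.1 (xm q.1) ι}.Finite ∧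
      x t ι = {q : ℝ≥0 × ℝ≥0 | q ∈ Q ι ∧ q.1 ≤ t ∧ q.2 ≤ lam q.1 (xm q.1) ι}.ncard

/-!
Let `zb` be the left limit of the `b`-solution `y` and `A` the atoms it accepts. Solving the
`a`-equation on `A` alone is a well-founded recursion along the event times of `A`, which are
locally finite. That solution counts a subset of `A`, so it stays below `zb`, and by the strong
ordering every atom of `Q` it accepts already lies in `A`. Hence it solves the `a`-equation on all
of `Q` and counts a subset of the atoms counted by `y`, which is the strong domination. Uniqueness
holds by induction along the event times of the atoms accepted by either of two solutions: up to
each such time both have seen the same past, hence they accept the same atoms.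
-/

open Filter Topology

namespace ThinningEquation

section Counting

variable {S P : Set (ℝ≥0 × ℝ≥0)}

lemma eventually_nhdsGE_sep_fst_le_eq (hS : ∀ t, {q ∈ S | q.1 ≤ t}.Finite) (t : ℝ≥0) :
    ∀ᶠ u in 𝓝[≥] t, {q ∈ S | q.1 ≤ u} = {q ∈ S | q.1 ≤ t} := by
  set D := {q ∈ S | q.1 ≤ t + 1 ∧ t < q.1}
  have hD : D.Finite := (hS (t + 1)).subset fun q hq => ⟨hq.1, hq.2.1⟩
  have hnear : ∀ᶠ u in 𝓝 t, u < t + 1 ∧ ∀ q ∈ D, u < q.1 :=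
    (gt_mem_nhds (lt_add_one t)).and (hD.eventually_all.2 fun q hq => gt_mem_nhds hq.2.2)
  filter_upwards [self_mem_nhdsWithin, mem_nhdsWithin_of_mem_nhds hnear] with u htu ⟨hu, hDu⟩
  ext q
  refine ⟨fun ⟨hq, hqu⟩ => ⟨hq, not_lt.1 fun htq => ?_⟩, fun ⟨hq, hqt⟩ => ⟨hq, hqt.trans htu⟩⟩
  exact (hDu q ⟨hq, hqu.trans hu.le, htq⟩).not_ge hqu

lemma eventually_nhdsLT_sep_fst_le_eq (hS : ∀ t, {q ∈ S | q.1 ≤ t}.Finite) (s : ℝ≥0) :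
    ∀ᶠ u in 𝓝[<] s, {q ∈ S | q.1 ≤ u} = {q ∈ S | q.1 < s} := by
  have hD : {q ∈ S | q.1 < s}.Finite := (hS s).subset fun q hq => ⟨hq.1, hq.2.le⟩
  have hlate : ∀ᶠ u in 𝓝 s, ∀ q ∈ {q ∈ S | q.1 < s}, q.1 < u :=
    hD.eventually_all.2 fun q hq => lt_mem_nhds hq.2
  filter_upwards [self_mem_nhdsWithin, mem_nhdsWithin_of_mem_nhds hlate] with u hus hDu
  ext q
  exact ⟨fun ⟨hq, hqu⟩ => ⟨hq, hqu.trans_lt hus⟩, fun hq => ⟨hq.1, (hDu q hq).le⟩⟩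

lemma intCast_ncard_sep_fst_le_sub_le (hSP : S ⊆ P) (hP : ∀ t, {q ∈ P | q.1 ≤ t}.Finite)
    {s t : ℝ≥0} (hst : s ≤ t) :
    ({q ∈ S | q.1 ≤ t}.ncard : ℤ) - {q ∈ S | q.1 ≤ s}.ncard ≤
      ({q ∈ P | q.1 ≤ t}.ncard : ℤ) - {q ∈ P | q.1 ≤ s}.ncard := by
  have hsub : ∀ u, {q ∈ S | q.1 ≤ u} ⊆ {q ∈ P | q.1 ≤ u} := fun u q hq => ⟨hSP hq.1, hq.2⟩
  have hs := Set.ncard_sdiff_add_ncard_of_subset (hsub s) (hP s)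
  have ht := Set.ncard_sdiff_add_ncard_of_subset (hsub t) (hP t)
  have hrest : ({q ∈ P | q.1 ≤ s} \ {q ∈ S | q.1 ≤ s}).ncard ≤
      ({q ∈ P | q.1 ≤ t} \ {q ∈ S | q.1 ≤ t}).ncard :=
    Set.ncard_le_ncard (fun q ⟨⟨hqP, hqs⟩, hqS⟩ => ⟨⟨hqP, hqs.trans hst⟩, fun h => hqS ⟨h.1, hqs⟩⟩)
      (hP t).sdiff
  omega

end Counting

lemma exists_pos_forall_Ico_of_eventually {p : ℝ≥0 → Prop} {t : ℝ≥0}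
    (h : ∀ᶠ u in 𝓝[≥] t, p u) : ∃ ε : ℝ≥0, 0 < ε ∧ ∀ u, t ≤ u → u < t + ε → p u := by
  obtain ⟨v, htv, hsub⟩ := mem_nhdsGE_iff_exists_Ico_subset.1 h
  refine ⟨v - t, tsub_pos_of_lt htv, fun u htu huv => hsub ⟨htu, ?_⟩⟩
  rwa [add_tsub_cancel_of_le htv.le] at huv

lemma exists_pos_forall_Ioo_of_eventually {p : ℝ≥0 → Prop} {s : ℝ≥0} (hs : 0 < s)
    (h : ∀ᶠ u in 𝓝[<] s, p u) : ∃ ε : ℝ≥0, 0 < ε ∧ ∀ u, u < s → s < u + ε → p u := by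
  obtain ⟨l, hls, hsub⟩ := (mem_nhdsLT_iff_exists_Ioo_subset' hs).1 h
  refine ⟨s - l, tsub_pos_of_lt hls, fun u hus hsu => hsub ⟨lt_of_not_ge fun hul => ?_, hus⟩⟩
  exact hsu.not_ge ((add_le_add_left hul _).trans (add_tsub_cancel_of_le hls.le).le)

lemma eventually_of_exists_pos_forall_Ioo {p : ℝ≥0 → Prop} {s : ℝ≥0}
    (h : ∃ ε : ℝ≥0, 0 < ε ∧ ∀ u, u < s → s < u + ε → p u) : ∀ᶠ u in 𝓝[<] s, p u := by
  obtain ⟨ε, hε, hp⟩ := h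
  have hnear : ∀ᶠ u in 𝓝 s, s < u + ε :=
    continuousAt_const.eventually_lt (continuousAt_id.add continuousAt_const)
      (lt_add_of_pos_right s hε)
  filter_upwards [self_mem_nhdsWithin, mem_nhdsWithin_of_mem_nhds hnear] with u hus hsu
  exact hp u hus hsu

section Predictable

variable {I : Type*}

def acceptedAtoms (Q : I → Set (ℝ≥0 × ℝ≥0)) (lam : ℝ≥0 → (I → ℕ) → I → ℝ≥0)
    (z : ℝ≥0 → I → ℕ) (ι : I) : Set (ℝ≥0 × ℝ≥0) :=
  {q ∈ Q ι | q.2 ≤ lam q.1 (z q.1) ι}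

/-- `z s` stands for the left limit `x(s⁻)`; nothing is required of `z 0`. -/
def IsPredictableSolution (Q : I → Set (ℝ≥0 × ℝ≥0)) (lam : ℝ≥0 → (I → ℕ) → I → ℝ≥0)
    (z : ℝ≥0 → I → ℕ) : Prop :=
  (∀ ι t, {q ∈ acceptedAtoms Q lam z ι | q.1 ≤ t}.Finite) ∧
    ∀ s, 0 < s → ∀ ι, z s ι = {q ∈ acceptedAtoms Q lam z ι | q.1 < s}.ncard

def eventTimes (S : I → Set (ℝ≥0 × ℝ≥0)) : Set ℝ≥0 := ⋃ ι, Prod.fst '' S ι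

lemma wellFounded_mem_eventTimes_and_lt [Finite I] {S : I → Set (ℝ≥0 × ℝ≥0)}
    (hS : ∀ ι t, {q ∈ S ι | q.1 ≤ t}.Finite) :
    WellFounded fun u s => u ∈ eventTimes S ∧ u < s := by
  have hfin : ∀ s, (eventTimes S ∩ Set.Iio s).Finite := fun s =>
    (Set.finite_iUnion fun ι => (hS ι s).image Prod.fst).subset fun u ⟨hu, hus⟩ => by
      obtain ⟨ι, q, hq, rfl⟩ := Set.mem_iUnion.1 hu
      exact Set.mem_iUnion.2 ⟨ι, q, ⟨hq, hus.le⟩, rfl⟩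
  refine Subrelation.wf (fun {u s} ⟨hu, hus⟩ => ?_)
    (measure fun s => (eventTimes S ∩ Set.Iio s).ncard).wf
  exact Set.ncard_lt_ncard ⟨fun v hv => ⟨hv.1, hv.2.trans hus⟩,
    fun hsub => lt_irrefl u (hsub ⟨hu, hus⟩).2⟩ (hfin s)

lemma exists_isPredictableSolution [Finite I] {A : I → Set (ℝ≥0 × ℝ≥0)}
    (hA : ∀ ι t, {q ∈ A ι | q.1 ≤ t}.Finite) (lam : ℝ≥0 → (I → ℕ) → I → ℝ≥0) :
    ∃ z, IsPredictableSolution A lam z := by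
  have hwf := wellFounded_mem_eventTimes_and_lt hA
  refine ⟨hwf.fix fun s rec ι => {q | ∃ h : q ∈ A ι ∧ q.1 < s,
      q.2 ≤ lam q.1 (rec q.1 ⟨Set.mem_iUnion.2 ⟨ι, q, h.1, rfl⟩, h.2⟩) ι}.ncard,
    fun ι t => (hA ι t).subset fun q hq => ⟨hq.1.1, hq.2⟩, fun s _ ι => ?_⟩
  rw [hwf.fix_eq]
  congr 1
  ext q
  simp only [acceptedAtoms, Set.mem_ofPred_eq, exists_prop]
  tauto

lemma IsPredictableSolution.acceptedAtoms_eq [Finite I] {Q : I → Set (ℝ≥0 × ℝ≥0)}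
    {lam : ℝ≥0 → (I → ℕ) → I → ℝ≥0} (hQ : ∀ ι, ∀ q ∈ Q ι, 0 < q.1) {z₁ z₂ : ℝ≥0 → I → ℕ}
    (h₁ : IsPredictableSolution Q lam z₁) (h₂ : IsPredictableSolution Q lam z₂) :
    acceptedAtoms Q lam z₁ = acceptedAtoms Q lam z₂ := by
  have hwf := wellFounded_mem_eventTimes_and_lt
    (S := fun ι => acceptedAtoms Q lam z₁ ι ∪ acceptedAtoms Q lam z₂ ι) fun ι t =>
      ((h₁.1 ι t).union (h₂.1 ι t)).subset fun q ⟨hq, hqt⟩ => hq.imp (⟨·, hqt⟩) (⟨·, hqt⟩)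
  have heq : ∀ s, 0 < s → z₁ s = z₂ s := by
    refine fun s => hwf.induction (C := fun s => 0 < s → z₁ s = z₂ s) s fun s ih hs => ?_
    funext κ
    rw [h₁.2 s hs κ, h₂.2 s hs κ]
    congr 1
    ext q
    have hagree : q.1 < s → q ∈ acceptedAtoms Q lam z₁ κ ∪ acceptedAtoms Q lam z₂ κ →
        z₁ q.1 = z₂ q.1 := fun hqs hq =>
      ih q.1 ⟨Set.mem_iUnion.2 ⟨κ, q, hq, rfl⟩, hqs⟩ (hQ κ q (hq.elim (·.1) (·.1)))
    constructor
    · rintro ⟨hq, hqs⟩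
      exact ⟨⟨hq.1, hagree hqs (.inl hq) ▸ hq.2⟩, hqs⟩
    · rintro ⟨hq, hqs⟩
      exact ⟨⟨hq.1, (hagree hqs (.inr hq)).symm ▸ hq.2⟩, hqs⟩
  funext ι
  ext q
  constructor
  · exact fun ⟨hq, hθ⟩ => ⟨hq, heq q.1 (hQ ι q hq) ▸ hθ⟩
  · exact fun ⟨hq, hθ⟩ => ⟨hq, (heq q.1 (hQ ι q hq)).symm ▸ hθ⟩

lemma acceptedAtoms_subset_of_le {Q : I → Set (ℝ≥0 × ℝ≥0)}
    (hQ : ∀ ι, ∀ q ∈ Q ι, 0 < q.1) {a b : ℝ≥0 → (I → ℕ) → I → ℝ≥0}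
    (hab : ∀ t, 0 < t → ∀ ι (y₁ y₂ : I → ℕ), (∀ κ, y₁ κ ≤ y₂ κ) → a t y₁ ι ≤ b t y₂ ι)
    {za zb : ℝ≥0 → I → ℕ} (hz : ∀ s, 0 < s → ∀ κ, za s κ ≤ zb s κ) (ι : I) :
    acceptedAtoms Q a za ι ⊆ acceptedAtoms Q b zb ι :=
  fun q ⟨hq, hθ⟩ => ⟨hq, hθ.trans (hab q.1 (hQ ι q hq) ι _ _ (hz q.1 (hQ ι q hq)))⟩

lemma acceptedAtoms_eq_of_subset {A Q : I → Set (ℝ≥0 × ℝ≥0)} (hAQ : ∀ ι, A ι ⊆ Q ι)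
    {lam : ℝ≥0 → (I → ℕ) → I → ℝ≥0} {z : ℝ≥0 → I → ℕ}
    (h : ∀ ι, acceptedAtoms Q lam z ι ⊆ A ι) : acceptedAtoms A lam z = acceptedAtoms Q lam z :=
  funext fun ι => Set.ext fun _ => ⟨fun hq => ⟨hAQ ι hq.1, hq.2⟩, fun hq => ⟨h ι hq, hq.2⟩⟩

end Predictable

section Thinning

variable {m : ℕ} {Q : Fin m → Set (ℝ≥0 × ℝ≥0)} {lam : ℝ≥0 → (Fin m → ℕ) → Fin m → ℝ≥0}

lemma setOf_mem_and_fst_le_and_le (z : ℝ≥0 → Fin m → ℕ) (t : ℝ≥0) (ι : Fin m) :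
    {q : ℝ≥0 × ℝ≥0 | q ∈ Q ι ∧ q.1 ≤ t ∧ q.2 ≤ lam q.1 (z q.1) ι} =
      {q ∈ acceptedAtoms Q lam z ι | q.1 ≤ t} := by
  ext q
  simp only [acceptedAtoms, Set.mem_ofPred_eq]
  tauto

lemma IsThinningSolution.exists_isPredictableSolution {x : ℝ≥0 → Fin m → ℕ}
    (hx : IsThinningSolution m Q lam x) :
    ∃ z, IsPredictableSolution Q lam z ∧
      ∀ t ι, x t ι = {q ∈ acceptedAtoms Q lam z ι | q.1 ≤ t}.ncard := by
  obtain ⟨-, -, -, z, hleft, hcount⟩ := hx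
  simp only [setOf_mem_and_fst_le_and_le] at hcount
  refine ⟨z, ⟨fun ι t => (hcount t ι).1, fun s hs ι => ?_⟩, fun t ι => (hcount t ι).2⟩
  have : (𝓝[<] s).NeBot := nhdsLT_neBot_of_exists_lt ⟨0, hs⟩
  have hwindow : ∀ᶠ u in 𝓝[<] s, x u = z s :=
    eventually_of_exists_pos_forall_Ioo (hleft s hs)
  obtain ⟨u, hxu, hu⟩ := (hwindow.and (eventually_nhdsLT_sep_fst_le_eq
    (fun t => (hcount t ι).1) s)).exists
  rw [← hu, ← (hcount u ι).2, hxu]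

lemma IsPredictableSolution.isThinningSolution (hQ : ∀ ι, ∀ q ∈ Q ι, 0 < q.1)
    {z : ℝ≥0 → Fin m → ℕ} (hz : IsPredictableSolution Q lam z) :
    IsThinningSolution m Q lam fun t ι => {q ∈ acceptedAtoms Q lam z ι | q.1 ≤ t}.ncard := by
  refine ⟨fun ι s t hst => Set.ncard_le_ncard (fun q hq => ⟨hq.1, hq.2.trans hst⟩) (hz.1 ι t),
    fun ι => ?_, fun ι t => ?_, z, fun s hs => ?_, fun t ι => ?_⟩
  · simp only [Set.ncard_eq_zero (hz.1 ι 0), Set.eq_empty_iff_forall_notMem]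
    exact fun q ⟨hq, hq0⟩ => (hQ ι q hq.1).not_ge hq0
  · exact exists_pos_forall_Ico_of_eventually <|
      (eventually_nhdsGE_sep_fst_le_eq (hz.1 ι) t).mono fun _ hu => congrArg Set.ncard hu
  · refine exists_pos_forall_Ioo_of_eventually hs ?_
    filter_upwards [eventually_all.2 fun ι => eventually_nhdsLT_sep_fst_le_eq (hz.1 ι) s]
      with u hu
    funext ι
    rw [hu ι, hz.2 s hs ι]
  · rw [setOf_mem_and_fst_le_and_le]
    exact ⟨hz.1 ι t, rfl⟩

theorem isThinningSolution_iff (hQ : ∀ ι, ∀ q ∈ Q ι, 0 < q.1) {x : ℝ≥0 → Fin m → ℕ} :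
    IsThinningSolution m Q lam x ↔ ∃ z, IsPredictableSolution Q lam z ∧
      ∀ t ι, x t ι = {q ∈ acceptedAtoms Q lam z ι | q.1 ≤ t}.ncard := by
  refine ⟨IsThinningSolution.exists_isPredictableSolution, fun ⟨z, hz, hx⟩ => ?_⟩
  obtain rfl : x = fun t ι => {q ∈ acceptedAtoms Q lam z ι | q.1 ≤ t}.ncard := funext₂ hx
  exact hz.isThinningSolution hQ

end Thinning

end ThinningEquation

open ThinningEquation

theorem statement5_general (m : ℕ) (Q : Fin m → Set (ℝ≥0 × ℝ≥0))
    -- atoms lie in `(0,∞) × (0,∞)`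
    (hQpos : ∀ ι, ∀ q ∈ Q ι, 0 < q.1 ∧ 0 < q.2)
    (a b : ℝ≥0 → (Fin m → ℕ) → Fin m → ℝ≥0)
    -- strong ordering `a ≤_s b`
    (hab : ∀ (t : ℝ≥0), 0 < t → ∀ (ι : Fin m) (y₁ y₂ : Fin m → ℕ),
      (∀ κ, y₁ κ ≤ y₂ κ) → a t y₁ ι ≤ b t y₂ ι)
    (hb : ∃! y, IsThinningSolution m Q b y) :
    (∃! x, IsThinningSolution m Q a x) ∧
    ∀ x y, IsThinningSolution m Q a x → IsThinningSolution m Q b y →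
      (∀ (ι : Fin m) (s t : ℝ≥0), s ≤ t →
        (x t ι : ℤ) - (x s ι : ℤ) ≤ (y t ι : ℤ) - (y s ι : ℤ)) ∧
      (∀ (t : ℝ≥0) (ι : Fin m), x t ι ≤ y t ι) := by
  have hQ : ∀ ι, ∀ q ∈ Q ι, 0 < q.1 := fun ι q hq => (hQpos ι q hq).1
  obtain ⟨y, hy, hy_unique⟩ := hb
  obtain ⟨zb, hzb, hy_count⟩ := (isThinningSolution_iff hQ).1 hy
  obtain ⟨za, hza⟩ := exists_isPredictableSolution hzb.1 a
  have hle : ∀ s, 0 < s → ∀ κ, za s κ ≤ zb s κ := fun s hs κ => by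
    rw [hza.2 s hs κ, hzb.2 s hs κ]
    exact Set.ncard_le_ncard (fun q hq => ⟨hq.1.1, hq.2⟩)
      ((hzb.1 κ s).subset fun q hq => ⟨hq.1, hq.2.le⟩)
  have hsub := acceptedAtoms_subset_of_le hQ hab hle
  have hacc := acceptedAtoms_eq_of_subset (fun ι q hq => hq.1) hsub
  have hzaQ : IsPredictableSolution Q a za := by rwa [IsPredictableSolution, ← hacc]
  have hx_unique : ∀ x', IsThinningSolution m Q a x' →
      x' = fun t ι => {q ∈ acceptedAtoms Q a za ι | q.1 ≤ t}.ncard := fun x' hx' => by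
    obtain ⟨z', hz', hx'_count⟩ := (isThinningSolution_iff hQ).1 hx'
    funext t ι
    rw [hx'_count, hz'.acceptedAtoms_eq hQ hzaQ]
  refine ⟨⟨_, hzaQ.isThinningSolution hQ, hx_unique⟩, fun x₀ y₀ hx₀ hy₀ => ?_⟩
  obtain rfl := hx_unique x₀ hx₀
  obtain rfl := hy_unique y₀ hy₀
  simp only [hy_count]
  exact ⟨fun ι s t hst => intCast_ncard_sep_fst_le_sub_le (hsub ι) (hzb.1 ι) hst,
    fun t ι => Set.ncard_le_ncard (fun q hq => ⟨hsub ι hq.1, hq.2⟩) (hzb.1 ι t)⟩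

/-- Pathwise form of Proposition 2.1: if `a` and `b` are strongly ordered
intensity functionals and the thinning equation for `b` has a unique solution
`y`, then the thinning equation for `a` has a unique solution `x`, which is
strongly dominated by `y` (the differences `y^ι − x^ι` are nondecreasing); in
particular `x ≤ y` componentwise. -/
theorem statement5 (m : ℕ) (hm : 1 ≤ m) (Q : Fin m → Set (ℝ≥0 × ℝ≥0))
    -- atoms lie in `(0,∞) × (0,∞)`
    (hQpos : ∀ ι, ∀ q ∈ Q ι, 0 < q.1 ∧ 0 < q.2)
    -- local finiteness
    (hQfin : ∀ (ι : Fin m) (t M : ℝ≥0), 0 < t → 0 < M →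
      (Q ι ∩ Set.Ioc 0 t ×ˢ Set.Ioc 0 M).Finite)
    -- no two atoms of `Q^ι` share the same time coordinate
    (hQinj : ∀ ι, ∀ q ∈ Q ι, ∀ q' ∈ Q ι, q.1 = q'.1 → q = q')
    (a b : ℝ≥0 → (Fin m → ℕ) → Fin m → ℝ≥0)
    -- strong ordering `a ≤_s b`
    (hab : ∀ (t : ℝ≥0), 0 < t → ∀ (ι : Fin m) (y₁ y₂ : Fin m → ℕ),
      (∀ κ, y₁ κ ≤ y₂ κ) → a t y₁ ι ≤ b t y₂ ι)
    (hb : ∃! y, IsThinningSolution m Q b y) :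
    (∃! x, IsThinningSolution m Q a x) ∧
    ∀ x y, IsThinningSolution m Q a x → IsThinningSolution m Q b y →
      (∀ (ι : Fin m) (s t : ℝ≥0), s ≤ t →
        (x t ι : ℤ) - (x s ι : ℤ) ≤ (y t ι : ℤ) - (y s ι : ℤ)) ∧
      (∀ (t : ℝ≥0) (ι : Fin m), x t ι ≤ y t ι) :=
  statement5_general m Q hQpos a b hab hb
end
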